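/- arXiv:2503.03490 — 4 statements merged into one kernel-verified Lean document; each statement's English description precedes it below -/
import Mathlib

section
/- Let g = g_1 ⊕ g_2 be a Lie algebra with [g_1,g_1] ⊆ g_1, [g_2,g_2] ⊆ g_1, [g_1,g_2] ⊆ g_2, and let the symmetric algebra S(g) carry the induced Poisson–Lie bracket. Let p = A_1A_2 and q = B_1B_2 be monomials with A_1,B_1 products of variables from g_1 and A_2,B_2 products of variables from g_2, of bidegrees G(p) = (i_1,i_2) and G(q) = (i_1',i_2'). If p is invariant under the coadjoint action of g_1 (so that {A_1, ·} brackets of g_1-variables against g_1-invariants vanish appropriately), then the Poisson bracket {p,q} is a sum of monomials each of bidegree (i_1+i_1'−1, i_2+i_2') or (i_1+i_1'+1, i_2+i_2'−2). -/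
open MvPolynomial

/-- The Poisson–Lie bracket on the symmetric algebra of an `n`-dimensional Lie algebra
with structure constants `K i j k`. -/
noncomputable def pbracket {F : Type*} [CommRing F] {n : ℕ}
    (K : Fin n → Fin n → Fin n → F) (p q : MvPolynomial (Fin n) F) :
    MvPolynomial (Fin n) F :=
  ∑ i : Fin n, ∑ j : Fin n, ∑ k : Fin n,
    MvPolynomial.C (K i j k) * MvPolynomial.X k * pderiv i p * pderiv j q

/-- The grading of a monomial with exponent vector `d` with respect to a block
decomposition `b` of the variables: `blockDeg b d j` is the total degree in the
variables belonging to the `j`-th block. -/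
noncomputable def blockDeg {σ : Type*} {m : ℕ} (b : σ → Fin m) (d : σ →₀ ℕ)
    (j : Fin m) : ℕ :=
  d.sum fun s k => if b s = j then k else 0

lemma blockDeg_add {σ : Type*} {m : ℕ} (b : σ → Fin m) (d e : σ →₀ ℕ) (j : Fin m) :
    blockDeg b (d + e) j = blockDeg b d j + blockDeg b e j := by
  classical
  unfold blockDeg
  exact Finsupp.sum_add_index (by intros; simp) (by intros; split <;> simp)

lemma blockDeg_single {σ : Type*} {m : ℕ} (b : σ → Fin m) (i : σ) (k : ℕ) (j : Fin m) :
    blockDeg b (Finsupp.single i k) j = if b i = j then k else 0 := by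
  classical
  unfold blockDeg
  exact Finsupp.sum_single_index (by simp)

/-- For `g = g₁ ⊕ g₂` with `[g₁,g₁] ⊆ g₁`, `[g₂,g₂] ⊆ g₁`, `[g₁,g₂] ⊆ g₂`, and monomials
`p, q` in the centralizer `S(g)^{g₁}` of bidegrees `(i₁,i₂)` and `(i₁',i₂')`, every
monomial occurring in `{p,q}` has bidegree `(i₁+i₁'−1, i₂+i₂')` or `(i₁+i₁'+1, i₂+i₂'−2)`. -/
theorem stmt5 {F : Type*} [Field F] {n : ℕ}
    (K : Fin n → Fin n → Fin n → F)
    (hanti : ∀ i j k, K i j k = - K j i k)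
    (b : Fin n → Fin 2)
    (h11 : ∀ i j k, b i = 0 → b j = 0 → K i j k ≠ 0 → b k = 0)
    (h22 : ∀ i j k, b i = 1 → b j = 1 → K i j k ≠ 0 → b k = 0)
    (h12 : ∀ i j k, b i ≠ b j → K i j k ≠ 0 → b k = 1)
    (d e : Fin n →₀ ℕ) (c c' : F) (hc : c ≠ 0) (hc' : c' ≠ 0)
    (hp : ∀ i, b i = 0 →
      pbracket K (MvPolynomial.X i) (MvPolynomial.monomial d c) = 0)
    (hq : ∀ i, b i = 0 →
      pbracket K (MvPolynomial.X i) (MvPolynomial.monomial e c') = 0) :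
    ∀ f ∈ (pbracket K (MvPolynomial.monomial d c) (MvPolynomial.monomial e c')).support,
      (blockDeg b f 0 + 1 = blockDeg b d 0 + blockDeg b e 0 ∧
        blockDeg b f 1 = blockDeg b d 1 + blockDeg b e 1)
      ∨ (blockDeg b f 0 = blockDeg b d 0 + blockDeg b e 0 + 1 ∧
        blockDeg b f 1 + 2 = blockDeg b d 1 + blockDeg b e 1) := by
  classical
  intro f hf
  unfold pbracket at hf
  replace hf := MvPolynomial.support_sum hf
  obtain ⟨i, -, hf⟩ := Finset.mem_biUnion.mp hf
  replace hf := MvPolynomial.support_sum hf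
  obtain ⟨j, -, hf⟩ := Finset.mem_biUnion.mp hf
  replace hf := MvPolynomial.support_sum hf
  obtain ⟨k, -, hf⟩ := Finset.mem_biUnion.mp hf
  rw [pderiv_monomial, pderiv_monomial, mul_assoc, monomial_mul,
      C_mul_X_eq_monomial, monomial_mul] at hf
  rw [MvPolynomial.support_monomial] at hf
  split at hf
  · simp at hf
  · rename_i hcoeff
    rw [Finset.mem_singleton] at hf
    have hK : K i j k ≠ 0 := fun h => hcoeff (by simp [h])
    have hdi : d i ≠ 0 := by
      intro h
      exact hcoeff (by simp [h])
    have hej : e j ≠ 0 := by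
      intro h
      exact hcoeff (by simp [h])
    set D := d - Finsupp.single i 1 with hD
    set E := e - Finsupp.single j 1 with hE
    have hd : d = D + Finsupp.single i 1 := by
      rw [hD, tsub_add_cancel_of_le (Finsupp.single_le_iff.mpr (Nat.one_le_iff_ne_zero.mpr hdi))]
    have he : e = E + Finsupp.single j 1 := by
      rw [hE, tsub_add_cancel_of_le (Finsupp.single_le_iff.mpr (Nat.one_le_iff_ne_zero.mpr hej))]
    have hfm : ∀ m, blockDeg b f m =
        (if b k = m then 1 else 0) + blockDeg b D m + blockDeg b E m := by
      intro m
      rw [hf, blockDeg_add, blockDeg_add, blockDeg_single]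
      omega
    have hdm : ∀ m, blockDeg b d m = blockDeg b D m + (if b i = m then 1 else 0) := by
      intro m
      conv_lhs => rw [hd]
      rw [blockDeg_add, blockDeg_single]
    have hem : ∀ m, blockDeg b e m = blockDeg b E m + (if b j = m then 1 else 0) := by
      intro m
      conv_lhs => rw [he]
      rw [blockDeg_add, blockDeg_single]
    have hbi : b i = 0 ∨ b i = 1 := by omega
    have hbj : b j = 0 ∨ b j = 1 := by omega
    rcases hbi with hbi | hbi <;> rcases hbj with hbj | hbj
    · have hbk : b k = 0 := h11 i j k hbi hbj hK
      left
      constructor <;> rw [hfm, hdm, hem] <;> simp [hbi, hbj, hbk] <;> omega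
    · have hbk : b k = 1 := h12 i j k (by rw [hbi, hbj]; decide) hK
      left
      constructor <;> rw [hfm, hdm, hem] <;> simp [hbi, hbj, hbk] <;> omega
    · have hbk : b k = 1 := h12 i j k (by rw [hbi, hbj]; decide) hK
      left
      constructor <;> rw [hfm, hdm, hem] <;> simp [hbi, hbj, hbk] <;> omega
    · have hbk : b k = 0 := h22 i j k hbi hbj hK
      right
      constructor <;> rw [hfm, hdm, hem] <;> simp [hbi, hbj, hbk] <;> omega
end

section
/- With g = g_1 ⊕ g_2 as above and p, q nonzero indecomposable monomials in the centralizer S(g)^{g_1}: if G(p) = (i_1, 0) with i_1 ≠ 0 (p involves only g_1-variables) and q is any element of S(g)^{g_1}, then {p, q} = 0. -/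
open MvPolynomial

lemma pbracket_X_left {F : Type*} [CommRing F] {n : ℕ}
    (K : Fin n → Fin n → Fin n → F) (i : Fin n) (q : MvPolynomial (Fin n) F) :
    pbracket K (MvPolynomial.X i) q
      = ∑ j, ∑ k, MvPolynomial.C (K i j k) * MvPolynomial.X k * pderiv j q := by
  unfold pbracket
  rw [Finset.sum_eq_single i]
  · simp [pderiv_X_self, mul_comm]
  · intro i' _ hne
    refine Finset.sum_eq_zero fun j _ => Finset.sum_eq_zero fun k _ => ?_
    rw [pderiv_X]
    simp [Pi.single_eq_of_ne (Ne.symm hne)]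
  · simp

/-- For `g = g₁ ⊕ g₂` as above, if `p` is a nonzero monomial in the centralizer
`S(g)^{g₁}` of bidegree `(i₁, 0)` with `i₁ ≠ 0` (involving only `g₁`-variables), and `q`
is any element of `S(g)^{g₁}`, then `{p, q} = 0`. -/
theorem stmt6 {F : Type*} [Field F] {n : ℕ}
    (K : Fin n → Fin n → Fin n → F)
    (hanti : ∀ i j k, K i j k = - K j i k)
    (b : Fin n → Fin 2)
    (h11 : ∀ i j k, b i = 0 → b j = 0 → K i j k ≠ 0 → b k = 0)
    (h22 : ∀ i j k, b i = 1 → b j = 1 → K i j k ≠ 0 → b k = 0)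
    (h12 : ∀ i j k, b i ≠ b j → K i j k ≠ 0 → b k = 1)
    (d : Fin n →₀ ℕ) (c : F) (hc : c ≠ 0)
    (hdeg1 : blockDeg b d 1 = 0) (hdeg0 : blockDeg b d 0 ≠ 0)
    (hp : ∀ i, b i = 0 →
      pbracket K (MvPolynomial.X i) (MvPolynomial.monomial d c) = 0)
    (q : MvPolynomial (Fin n) F)
    (hq : ∀ i, b i = 0 → pbracket K (MvPolynomial.X i) q = 0) :
    pbracket K (MvPolynomial.monomial d c) q = 0 := by
  have hd1 : ∀ i : Fin n, b i = 1 → d i = 0 := by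
    intro i hi
    by_contra h
    have hi' : i ∈ d.support := Finsupp.mem_support_iff.mpr h
    have h0 : (if b i = (1 : Fin 2) then d i else 0) = 0 := by
      have := hdeg1
      unfold blockDeg at this
      rw [Finsupp.sum] at this
      exact (Finset.sum_eq_zero_iff).mp this i hi'
    rw [if_pos hi] at h0
    exact h h0
  unfold pbracket
  refine Finset.sum_eq_zero fun i _ => ?_
  rcases Fin.exists_fin_two.mp ⟨b i, rfl⟩ with hbi | hbi
  · have h0 := hq i hbi
    rw [pbracket_X_left] at h0
    have : (∑ j, ∑ k, MvPolynomial.C (K i j k) * MvPolynomial.X k *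
        pderiv i (MvPolynomial.monomial d c) * pderiv j q)
        = pderiv i (MvPolynomial.monomial d c) *
          ∑ j, ∑ k, MvPolynomial.C (K i j k) * MvPolynomial.X k * pderiv j q := by
      rw [Finset.mul_sum]
      refine Finset.sum_congr rfl fun j _ => ?_
      rw [Finset.mul_sum]
      refine Finset.sum_congr rfl fun k _ => ?_
      ring
    rw [this, h0, mul_zero]
  · have : pderiv i (MvPolynomial.monomial d c) = 0 := by
      rw [pderiv_monomial, hd1 i hbi]
      simp
    refine Finset.sum_eq_zero fun j _ => Finset.sum_eq_zero fun k _ => ?_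
    rw [this]
    ring
end

section
/- In the Poisson algebra S(sl(3,ℂ))^h generated by the Cartan coordinates h_1, h_2 and the cycle polynomials p_{i,j} = e_{ij}e_{ji} (1 ≤ i < j ≤ 3) and p_{1,2,3} = e_{12}e_{23}e_{31}, p_{1,3,2} = e_{13}e_{32}e_{21}, the Poisson bracket of any two quadratic generators p_{i,j}, p_{k,l} is a linear combination of p_{1,2,3} and p_{1,3,2} only (no Cartan terms and no decomposable terms appear). In particular {p_{i,j}, p_{i,j}} = 0 and for {i,j} ≠ {k,l} the bracket lies in span{p_{1,2,3}, p_{1,3,2}}. -/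
set_option maxHeartbeats 1000000


/-- In the Poisson algebra `S(sl(3,ℂ))` (with coordinates `e i j` satisfying
`{e_{ij}, e_{kl}} = δ_{jk} e_{il} − δ_{il} e_{kj}`), the Poisson bracket of any two
quadratic Cartan-invariant generators `p_{i,j} = e_{ij}e_{ji}` is a linear combination
of the two cubic cycle generators `p_{1,2,3} = e_{12}e_{23}e_{31}` and
`p_{1,3,2} = e_{13}e_{32}e_{21}` only. -/
theorem stmt14 {S : Type*} [CommRing S]
    (br : S → S → S)
    (hadd_left : ∀ a b c : S, br (a + b) c = br a c + br b c)
    (hadd_right : ∀ a b c : S, br a (b + c) = br a b + br a c)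
    (hleib_left : ∀ a b c : S, br (a * b) c = br a c * b + a * br b c)
    (hleib_right : ∀ a b c : S, br a (b * c) = br a b * c + b * br a c)
    (e : Fin 3 → Fin 3 → S)
    (hrel : ∀ i j k l : Fin 3, br (e i j) (e k l)
      = (if j = k then e i l else 0) - (if i = l then e k j else 0)) :
    ∀ i j k l : Fin 3, i ≠ j → k ≠ l →
      ∃ a b : ℤ, br (e i j * e j i) (e k l * e l k)
        = a • (e 0 1 * e 1 2 * e 2 0) + b • (e 0 2 * e 2 1 * e 1 0) := by
  intro i j k l hij hkl
  fin_cases i <;> fin_cases j <;> fin_cases k <;> fin_cases l <;>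
    first
    | exact absurd rfl hij
    | exact absurd rfl hkl
    | (refine ⟨0, 0, ?_⟩
       simp only [hleib_left, hleib_right, hrel]
       simp
       ring1)
    | (refine ⟨1, -1, ?_⟩
       simp only [hleib_left, hleib_right, hrel]
       simp
       ring1)
    | (refine ⟨-1, 1, ?_⟩
       simp only [hleib_left, hleib_right, hrel]
       simp
       ring1)
end

section
/- In the symmetric algebra S(sl(3,ℂ)) with the Poisson–Lie bracket, the six polynomials A_1 = e_{13}, A_2 = 3e_{12}e_{23} + (h_1−h_2)e_{13}, A_3 = h_1²+h_2²+h_1h_2+3(e_{12}e_{21}+e_{23}e_{32}+e_{13}e_{31}), A_4 = e_{12}e_{23}² + e_{13}(h_1 e_{23} − e_{13}e_{21}), A_5 = e_{13}(e_{13}e_{32}+h_2 e_{12}) − e_{12}²e_{23} all Poisson-commute with the three coordinates e_{12}, e_{23}, e_{13} of the nilpotent subalgebra o(3) ≅ n^+ ⊂ sl(3,ℂ), i.e. they lie in the commutant S(sl(3,ℂ))^{n^+}. -/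
/-- In `S(sl(3,ℂ))` with the Poisson–Lie bracket (coordinates `e i j` with
`{e_{ij}, e_{kl}} = δ_{jk} e_{il} − δ_{il} e_{kj}`, `h₁ = e₁₁−e₂₂`, `h₂ = e₂₂−e₃₃`),
the five polynomials `A₁,…,A₅` Poisson-commute with the coordinates `e₁₂, e₂₃, e₁₃` of
the nilpotent subalgebra `n⁺ ≅ o(3)`, i.e. they lie in the commutant `S(sl(3,ℂ))^{n⁺}`. -/
theorem stmt15 {S : Type*} [CommRing S]
    (br : S → S → S)
    (hadd_left : ∀ a b c : S, br (a + b) c = br a c + br b c)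
    (hadd_right : ∀ a b c : S, br a (b + c) = br a b + br a c)
    (hleib_left : ∀ a b c : S, br (a * b) c = br a c * b + a * br b c)
    (hleib_right : ∀ a b c : S, br a (b * c) = br a b * c + b * br a c)
    (e : Fin 3 → Fin 3 → S)
    (hrel : ∀ i j k l : Fin 3, br (e i j) (e k l)
      = (if j = k then e i l else 0) - (if i = l then e k j else 0)) :
    let h₁ := e 0 0 - e 1 1
    let h₂ := e 1 1 - e 2 2
    let A₁ := e 0 2
    let A₂ := 3 * (e 0 1 * e 1 2) + (h₁ - h₂) * e 0 2
    let A₃ := h₁ ^ 2 + h₂ ^ 2 + h₁ * h₂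
      + 3 * (e 0 1 * e 1 0 + e 1 2 * e 2 1 + e 0 2 * e 2 0)
    let A₄ := e 0 1 * (e 1 2) ^ 2 + e 0 2 * (h₁ * e 1 2 - e 0 2 * e 1 0)
    let A₅ := e 0 2 * (e 0 2 * e 2 1 + h₂ * e 0 1) - (e 0 1) ^ 2 * e 1 2
    ∀ A ∈ ({A₁, A₂, A₃, A₄, A₅} : Set S),
      br (e 0 1) A = 0 ∧ br (e 1 2) A = 0 ∧ br (e 0 2) A = 0 := by

  intro h₁ h₂ A₁ A₂ A₃ A₄ A₅ A hA
  have h0r : ∀ a : S, br a 0 = 0 := by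
    intro a
    have h := hadd_right a 0 0
    rw [add_zero] at h
    have h2 : br a 0 + br a 0 = br a 0 + 0 := by rw [add_zero]; exact h.symm
    exact add_left_cancel h2
  have hsub_right : ∀ a b c : S, br a (b - c) = br a b - br a c := by
    intro a b c
    have h := hadd_right a (b - c) c
    rw [sub_add_cancel] at h
    rw [h]; ring
  have h1r : ∀ a : S, br a 1 = 0 := by
    intro a
    have h := hleib_right a 1 1
    rw [mul_one, one_mul, mul_one] at h
    have h2 : br a 1 + 0 = br a 1 + br a 1 := by rw [add_zero]; exact h
    exact (add_left_cancel h2).symm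
  have h3r : ∀ a : S, br a 3 = 0 := by
    intro a
    have h : (3 : S) = 1 + 1 + 1 := by ring
    rw [h, hadd_right, hadd_right, h1r]; ring
  simp only [Set.mem_insert_iff, Set.mem_singleton_iff] at hA
  rcases hA with rfl | rfl | rfl | rfl | rfl <;>
    refine ⟨?_, ?_, ?_⟩ <;>
    · simp only [A₁, A₂, A₃, A₄, A₅, h₁, h₂]
      simp only [pow_two, hleib_right, hadd_right, hsub_right, hrel, h3r,
        show ((0:Fin 3) = 1) = False from by simp, show ((1:Fin 3) = 0) = False from by simp,
        show ((0:Fin 3) = 2) = False from by simp, show ((2:Fin 3) = 0) = False from by simp,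
        show ((1:Fin 3) = 2) = False from by simp, show ((2:Fin 3) = 1) = False from by simp,
        if_true, if_false, eq_self_iff_true]
      ring
end
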